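/- Let T and T' be ternary trees on the same label set N with |N| = n ≥ 4. If the sets of embedded quartet topologies coincide, Q_T = Q_{T'}, then T and T' are isomorphic as graphs via an isomorphism that fixes each labeled leaf. Equivalently, non-isomorphic (leaf-label-preservingly) ternary trees T ≠ T' on N satisfy Q_T ≠ Q_{T'}. -/

import Mathlib

/-- A ternary tree on a label set `N`: a finite undirected tree in which every
vertex has degree 1 or 3, together with a bijective labeling of the degree-1
vertices (leaves) by the elements of `N`. -/
structure TernaryTree (N : Type) where
  V : Type
  [fintypeV : Fintype V]
  [decEqV : DecidableEq V]
  G : SimpleGraph V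
  [decAdj : DecidableRel G.Adj]
  isTree : G.IsTree
  deg13 : ∀ v : V, G.degree v = 1 ∨ G.degree v = 3
  leaf : N → V
  leaf_inj : Function.Injective leaf
  leaf_deg : ∀ x : N, G.degree (leaf x) = 1
  leaf_surj : ∀ v : V, G.degree v = 1 → ∃ x : N, leaf x = v

attribute [instance] TernaryTree.fintypeV TernaryTree.decEqV TernaryTree.decAdj

/-- `T` is consistent with (embeds) the quartet topology `uv|wx`: the unique path
from leaf `u` to leaf `v` is vertex-disjoint from the unique path from leaf `w`
to leaf `x`. -/
def TernaryTree.Consistent {N : Type} (T : TernaryTree N) (u v w x : N) : Prop :=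
  ∃ (p : T.G.Walk (T.leaf u) (T.leaf v)) (q : T.G.Walk (T.leaf w) (T.leaf x)),
    p.IsPath ∧ q.IsPath ∧ ∀ a, a ∈ p.support → a ∉ q.support

/-- A quartet topology on `N`: a partition of a 4-element subset of `N`
into two unordered pairs, encoded as an element of `Sym2 (Sym2 N)`. -/
def IsQuartetTopology {N : Type} (q : Sym2 (Sym2 N)) : Prop :=
  ∃ u v w x : N, u ≠ v ∧ u ≠ w ∧ u ≠ x ∧ v ≠ w ∧ v ≠ x ∧ w ≠ x ∧
    q = s(s(u, v), s(w, x))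

/-- `QT T` is the set of quartet topologies embedded in the ternary tree `T`. -/
def TernaryTree.QT {N : Type} (T : TernaryTree N) : Set (Sym2 (Sym2 N)) :=
  {q | ∃ u v w x : N, u ≠ v ∧ u ≠ w ∧ u ≠ x ∧ v ≠ w ∧ v ≠ x ∧ w ≠ x ∧
        q = s(s(u, v), s(w, x)) ∧ T.Consistent u v w x}

/-- A leaf-label-preserving isomorphism between two ternary trees on the same
label set `N`. -/
def TreeIso {N : Type} (T T' : TernaryTree N) : Prop :=
  ∃ φ : T.V ≃ T'.V,
    (∀ a b : T.V, T.G.Adj a b ↔ T'.G.Adj (φ a) (φ b)) ∧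
    ∀ x : N, φ (T.leaf x) = T'.leaf x

/-!
Attach to each vertex `v` the set of pairs of leaves whose connecting path passes through `v`.
This set determines `v`, and also adjacency: `w` lies on the path from `u` to `v` iff every leaf
path through both `u` and `v` passes through `w`. For a leaf the set is explicit. An internal
vertex is the median of three leaves `a, b, c` in distinct branches, and a leaf `x ≠ a` lies in
the branch of `a` iff `xa|bc` is an embedded quartet topology, so the set is read off from the
quartets. Hence both trees realise the same family of sets, and matching vertices with equal sets
is the required isomorphism.
-/

namespace SimpleGraph.IsTree

open Walk

variable {V : Type*} {G : SimpleGraph V} (hG : G.IsTree)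

noncomputable def path (a b : V) : G.Walk a b := (hG.existsUnique_path a b).choose

lemma isPath_path (a b : V) : (hG.path a b).IsPath :=
  (hG.existsUnique_path a b).choose_spec.1

lemma eq_path {a b : V} {p : G.Walk a b} (hp : p.IsPath) : p = hG.path a b :=
  (hG.existsUnique_path a b).choose_spec.2 p hp

lemma path_self (a : V) : hG.path a a = nil :=
  (hG.eq_path IsPath.nil).symm

lemma mem_path_comm {a b z : V} :
    z ∈ (hG.path a b).support ↔ z ∈ (hG.path b a).support := by
  rw [← hG.eq_path (hG.isPath_path a b).reverse, support_reverse, List.mem_reverse]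

lemma path_eq_append {a b z : V} (hz : z ∈ (hG.path a b).support) :
    hG.path a b = (hG.path a z).append (hG.path z b) := by
  classical
  have hp := hG.isPath_path a b
  rw [← take_spec _ hz, ← hG.eq_path (hp.takeUntil hz), ← hG.eq_path (hp.dropUntil hz)]

lemma mem_path_iff_of_mem {a b z y : V} (hz : z ∈ (hG.path a b).support) :
    y ∈ (hG.path a b).support ↔ y ∈ (hG.path a z).support ∨ y ∈ (hG.path z b).support := by
  rw [hG.path_eq_append hz, mem_support_append_iff]

lemma mem_path_of_mem_left {a b z y : V} (hz : z ∈ (hG.path a b).support)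
    (hy : y ∈ (hG.path a z).support) : y ∈ (hG.path a b).support :=
  (hG.mem_path_iff_of_mem hz).2 (Or.inl hy)

lemma mem_path_of_mem_right {a b z y : V} (hz : z ∈ (hG.path a b).support)
    (hy : y ∈ (hG.path z b).support) : y ∈ (hG.path a b).support :=
  (hG.mem_path_iff_of_mem hz).2 (Or.inr hy)

lemma length_path_eq_add {a b z : V} (hz : z ∈ (hG.path a b).support) :
    (hG.path a b).length = (hG.path a z).length + (hG.path z b).length := by
  rw [hG.path_eq_append hz, length_append]

lemma mem_path_of_mem_of_mem {a b u v w : V} (hu : u ∈ (hG.path a b).support)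
    (hv : v ∈ (hG.path a b).support) (hw : w ∈ (hG.path u v).support) :
    w ∈ (hG.path a b).support := by
  rcases (hG.mem_path_iff_of_mem hv).1 hu with hu | hu
  · exact hG.mem_path_of_mem_left hv (hG.mem_path_of_mem_right hu hw)
  · exact hG.mem_path_of_mem_right hv (hG.mem_path_of_mem_left hu (hG.mem_path_comm.1 hw))

lemma mem_path_of_forall_eq {a b m : V}
    (h : ∀ z ∈ (hG.path a m).support, z ∈ (hG.path m b).support → z = m) :
    m ∈ (hG.path a b).support := by
  have hglue : ((hG.path a m).append (hG.path m b)).IsPath := by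
    have hmb := (hG.isPath_path m b).support_nodup
    rw [← cons_tail_support, List.nodup_cons] at hmb
    rw [isPath_def, support_append, List.nodup_append]
    refine ⟨(hG.isPath_path a m).support_nodup, hmb.2, fun z hz y hy hzy => ?_⟩
    subst hzy
    have hzm := h z hz (by rw [← cons_tail_support]; exact List.mem_cons_of_mem _ hy)
    exact hmb.1 (hzm ▸ hy)
  rw [← hG.eq_path hglue, mem_support_append_iff]
  exact Or.inl (end_mem_support _)

def IsMedian (a b c m : V) : Prop :=
  m ∈ (hG.path a b).support ∧ m ∈ (hG.path b c).support ∧ m ∈ (hG.path a c).support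

lemma IsMedian.rotate {a b c m : V} (h : hG.IsMedian a b c m) : hG.IsMedian b c a m :=
  ⟨h.2.1, hG.mem_path_comm.1 h.2.2, hG.mem_path_comm.1 h.1⟩

/-- The median of `a b c` is the vertex of `path a b ∩ path c b` closest to `a`. -/
lemma exists_isMedian (a b c : V) : ∃ m, hG.IsMedian a b c m := by
  obtain ⟨m, ⟨hmab, hmcb⟩, hmin⟩ :=
    (measure fun z => (hG.path a z).length).wf.has_min
      {z | z ∈ (hG.path a b).support ∧ z ∈ (hG.path c b).support}
      ⟨b, end_mem_support _, end_mem_support _⟩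
  refine ⟨m, hmab, hG.mem_path_comm.1 hmcb, hG.mem_path_of_forall_eq fun z hzam hzmc => ?_⟩
  have hz : z ∈ (hG.path a b).support ∧ z ∈ (hG.path c b).support :=
    ⟨hG.mem_path_of_mem_left hmab hzam,
      hG.mem_path_of_mem_left hmcb (hG.mem_path_comm.1 hzmc)⟩
  have hlen := hG.length_path_eq_add hzam
  have hle : ¬ (hG.path a z).length < (hG.path a m).length := hmin z hz
  exact eq_of_length_eq_zero (p := hG.path z m) (by omega)

noncomputable def next (v u : V) : V := (hG.path v u).snd

lemma next_self (v : V) : hG.next v v = v := by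
  simp [next, path_self]

lemma adj_next {v u : V} (h : v ≠ u) : G.Adj v (hG.next v u) :=
  adj_snd (not_nil_of_ne h)

lemma next_mem_path (v u : V) : hG.next v u ∈ (hG.path v u).support :=
  getVert_mem_support _ _

lemma next_eq_of_adj {v u : V} (h : G.Adj v u) : hG.next v u = u :=
  (hG.isAcyclic.eq_snd_of_adj_start (hG.isPath_path v u) h (end_mem_support _)).symm

lemma next_eq_of_mem {v u z : V} (hz : z ∈ (hG.path v u).support) (hzv : z ≠ v) :
    hG.next v z = hG.next v u :=
  hG.isAcyclic.eq_snd_of_adj_start (hG.isPath_path v u) (hG.adj_next hzv.symm)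
    (hG.mem_path_of_mem_left hz (hG.next_mem_path v z))

lemma mem_path_iff_next_ne {v s t : V} (ht : v ≠ t) :
    v ∈ (hG.path s t).support ↔ hG.next v s ≠ hG.next v t := by
  constructor
  · intro hv hst
    have hnodup := (hG.isPath_path s t).support_nodup
    rw [hG.path_eq_append hv, support_append, List.nodup_append] at hnodup
    refine hnodup.2.2 _ (hG.mem_path_comm.1 (hG.next_mem_path v s)) _ ?_ rfl
    rw [hst]
    exact snd_mem_tail_support (not_nil_of_ne ht)
  · intro hne
    obtain ⟨m, hmvs, hmst, hmvt⟩ := hG.exists_isMedian v s t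
    by_cases hmv : m = v
    · exact hmv ▸ hmst
    · exact absurd ((hG.next_eq_of_mem hmvs hmv).symm.trans (hG.next_eq_of_mem hmvt hmv)) hne

lemma adj_iff_forall_mem_path {u v : V} :
    G.Adj u v ↔ u ≠ v ∧ ∀ w ∈ (hG.path u v).support, w = u ∨ w = v := by
  constructor
  · intro h
    refine ⟨h.ne, fun w hw => ?_⟩
    rw [← hG.eq_path ((Path.singleton h).property)] at hw
    simpa using hw
  · rintro ⟨huv, h⟩
    have hnext : hG.next u v = v :=
      (h _ (hG.next_mem_path u v)).resolve_left (hG.adj_next huv).ne'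
    exact hnext ▸ hG.adj_next huv

/-- Take `y` as far from `v` as possible in the direction of `c`. -/
lemma exists_next_eq_and_forall_adj [Finite V] {v c : V} (h : G.Adj v c) :
    ∃ y, hG.next v y = c ∧ ∀ z, G.Adj y z → z = hG.next y v := by
  obtain ⟨y, hyc, hmax⟩ := Set.exists_max_image {y | hG.next v y = c}
    (fun y => (hG.path v y).length) (Set.toFinite _) ⟨c, hG.next_eq_of_adj h⟩
  have hyv : y ≠ v := by
    rintro rfl
    exact h.ne (by simpa [hG.next_self] using hyc)
  refine ⟨y, hyc, fun z hz => by_contra fun hzn => ?_⟩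
  have hyz : y ∈ (hG.path v z).support := by
    rw [hG.mem_path_iff_next_ne hz.ne, hG.next_eq_of_adj hz]
    exact Ne.symm hzn
  have hzc : hG.next v z = c := (hG.next_eq_of_mem hyz hyv).symm.trans hyc
  have hlen := hG.length_path_eq_add hyz
  have hyz_pos : 0 < (hG.path y z).length :=
    not_nil_iff_lt_length.1 (not_nil_of_ne hz.ne)
  have := hmax z hzc
  omega

end SimpleGraph.IsTree

/-- `x` lies in the branch containing `a` at the median of `a, b, c`, read off from a set `Q`
of quartet topologies. -/
def InBranch {N : Type} (Q : Set (Sym2 (Sym2 N))) (a b c x : N) : Prop :=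
  x = a ∨ s(s(x, a), s(b, c)) ∈ Q

/-- The pairs of leaves lying in different branches at the median of `a, b, c`. -/
def medianPairs {N : Type} (Q : Set (Sym2 (Sym2 N))) (a b c : N) : Set (N × N) :=
  {p | ¬ (InBranch Q a b c p.1 ∧ InBranch Q a b c p.2) ∧
    ¬ (InBranch Q b c a p.1 ∧ InBranch Q b c a p.2) ∧
    ¬ (InBranch Q c a b p.1 ∧ InBranch Q c a b p.2)}

namespace TernaryTree

open SimpleGraph Walk

variable {N : Type} (T : TernaryTree N)

def pairsThrough (v : T.V) : Set (N × N) :=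
  {p | v ∈ (T.isTree.path (T.leaf p.1) (T.leaf p.2)).support}

lemma consistent_iff {u v w x : N} :
    T.Consistent u v w x ↔ ∀ z ∈ (T.isTree.path (T.leaf u) (T.leaf v)).support,
      z ∉ (T.isTree.path (T.leaf w) (T.leaf x)).support := by
  constructor
  · rintro ⟨p, q, hp, hq, h⟩
    rwa [← T.isTree.eq_path hp, ← T.isTree.eq_path hq]
  · exact fun h => ⟨_, _, T.isTree.isPath_path _ _, T.isTree.isPath_path _ _, h⟩

variable {T} in
lemma Consistent.swap_left {u v w x : N} (h : T.Consistent u v w x) : T.Consistent v u w x := by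
  obtain ⟨p, q, hp, hq, h⟩ := h
  exact ⟨p.reverse, q, hp.reverse, hq, by simpa using h⟩

variable {T} in
lemma Consistent.symm {u v w x : N} (h : T.Consistent u v w x) : T.Consistent w x u v := by
  obtain ⟨p, q, hp, hq, h⟩ := h
  exact ⟨q, p, hq, hp, fun a haq hap => h a hap haq⟩

lemma consistent_of_mem_QT {u v w x : N} (h : s(s(u, v), s(w, x)) ∈ T.QT) :
    T.Consistent u v w x := by
  obtain ⟨u', v', w', x', -, -, -, -, -, -, he, hc⟩ := h
  rcases Sym2.eq_iff.1 he with ⟨h₁, h₂⟩ | ⟨h₁, h₂⟩ <;>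
    rcases Sym2.eq_iff.1 h₁ with ⟨rfl, rfl⟩ | ⟨rfl, rfl⟩ <;>
    rcases Sym2.eq_iff.1 h₂ with ⟨rfl, rfl⟩ | ⟨rfl, rfl⟩
  all_goals first
    | exact hc
    | exact hc.swap_left
    | exact hc.symm.swap_left.symm
    | exact hc.swap_left.symm.swap_left.symm
    | exact hc.symm
    | exact hc.swap_left.symm
    | exact hc.symm.swap_left
    | exact hc.swap_left.symm.swap_left

lemma eq_or_eq_of_leaf_mem_path {x y z : N}
    (h : T.leaf z ∈ (T.isTree.path (T.leaf x) (T.leaf y)).support) : z = x ∨ z = y := by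
  by_contra! hne
  have hx : T.leaf z ≠ T.leaf x := T.leaf_inj.ne hne.1
  have hy : T.leaf z ≠ T.leaf y := T.leaf_inj.ne hne.2
  have hsub : {T.isTree.next (T.leaf z) (T.leaf x), T.isTree.next (T.leaf z) (T.leaf y)} ⊆
      T.G.neighborFinset (T.leaf z) := by
    simp [Finset.insert_subset_iff, T.isTree.adj_next hx, T.isTree.adj_next hy]
  have hcard := Finset.card_le_card hsub
  rw [Finset.card_pair ((T.isTree.mem_path_iff_next_ne hy).1 h), card_neighborFinset_eq_degree,
    T.leaf_deg] at hcard
  omega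

lemma pairsThrough_leaf (z : N) : T.pairsThrough (T.leaf z) = {p | p.1 = z ∨ p.2 = z} := by
  ext ⟨x, y⟩
  refine ⟨fun h => (T.eq_or_eq_of_leaf_mem_path h).imp Eq.symm Eq.symm, ?_⟩
  rintro (rfl | rfl)
  · exact start_mem_support _
  · exact end_mem_support _

lemma exists_leaf_eq_or_degree_eq_three (v : T.V) : (∃ x, T.leaf x = v) ∨ T.G.degree v = 3 :=
  (T.deg13 v).imp (T.leaf_surj v) id

lemma exists_adj_ne_ne {v : T.V} (hv : T.G.degree v = 3) (s t : T.V) :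
    ∃ c, T.G.Adj v c ∧ c ≠ s ∧ c ≠ t := by
  have hlt : ({s, t} : Finset T.V).card < (T.G.neighborFinset v).card := by
    rw [card_neighborFinset_eq_degree, hv]
    exact Finset.card_le_two.trans_lt (by norm_num)
  obtain ⟨c, hc, hcst⟩ := Finset.exists_mem_notMem_of_card_lt_card hlt
  simp only [Finset.mem_insert, Finset.mem_singleton, not_or] at hcst
  exact ⟨c, (mem_neighborFinset _ _ _).1 hc, hcst⟩

lemma eq_or_eq_or_eq_of_adj {v c₁ c₂ c₃ z : T.V} (hv : T.G.degree v = 3)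
    (h₁ : T.G.Adj v c₁) (h₂ : T.G.Adj v c₂) (h₃ : T.G.Adj v c₃)
    (h₁₂ : c₁ ≠ c₂) (h₁₃ : c₁ ≠ c₃) (h₂₃ : c₂ ≠ c₃) (hz : T.G.Adj v z) :
    z = c₁ ∨ z = c₂ ∨ z = c₃ := by
  have hsub : {c₁, c₂, c₃} ⊆ T.G.neighborFinset v := by
    simp [Finset.insert_subset_iff, h₁, h₂, h₃]
  have hcard : (T.G.neighborFinset v).card ≤ ({c₁, c₂, c₃} : Finset T.V).card := by
    rw [Finset.card_eq_three.2 ⟨_, _, _, h₁₂, h₁₃, h₂₃, rfl⟩, card_neighborFinset_eq_degree, hv]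
  have hz' := (mem_neighborFinset _ _ _).2 hz
  rw [← Finset.eq_of_subset_of_card_le hsub hcard] at hz'
  simpa using hz'

lemma exists_leaf_next_eq {v c : T.V} (h : T.G.Adj v c) : ∃ x, T.isTree.next v (T.leaf x) = c := by
  obtain ⟨y, hyc, hy⟩ := T.isTree.exists_next_eq_and_forall_adj h
  have hdeg : T.G.degree y ≤ 1 := by
    rw [← card_neighborFinset_eq_degree]
    exact (Finset.card_le_card (t := {T.isTree.next y v}) fun z hz =>
      Finset.mem_singleton.2 (hy z ((mem_neighborFinset _ _ _).1 hz))).trans_eq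
        (Finset.card_singleton _)
  obtain ⟨x, rfl⟩ := T.leaf_surj y ((T.deg13 y).resolve_right (by omega))
  exact ⟨x, hyc⟩

lemma exists_leaf_mem_path_not_mem_path (v s : T.V) {t : T.V} (htv : t ≠ v) :
    ∃ x, v ∈ (T.isTree.path s (T.leaf x)).support ∧
      t ∉ (T.isTree.path v (T.leaf x)).support := by
  rcases T.exists_leaf_eq_or_degree_eq_three v with ⟨x, rfl⟩ | hv
  · exact ⟨x, end_mem_support _, by simpa [T.isTree.path_self] using htv⟩
  obtain ⟨c, hvc, hcs, hct⟩ := T.exists_adj_ne_ne hv (T.isTree.next v s) (T.isTree.next v t)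
  obtain ⟨x, hx⟩ := T.exists_leaf_next_eq hvc
  have hvx : v ≠ T.leaf x := fun h => hvc.ne (by rw [← hx, ← h, T.isTree.next_self])
  refine ⟨x, (T.isTree.mem_path_iff_next_ne hvx).2 (hx ▸ hcs.symm), fun ht => hct ?_⟩
  rw [← hx, T.isTree.next_eq_of_mem ht htv]

lemma mem_path_iff_pairsThrough_subset {u v w : T.V} :
    w ∈ (T.isTree.path u v).support ↔ T.pairsThrough u ∩ T.pairsThrough v ⊆ T.pairsThrough w := by
  refine ⟨fun hw p hp => T.isTree.mem_path_of_mem_of_mem hp.1 hp.2 hw, fun hsub => ?_⟩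
  by_contra hw
  have hwv : w ≠ v := fun h => hw (h ▸ end_mem_support _)
  have hwu : w ≠ u := fun h => hw (h ▸ start_mem_support _)
  obtain ⟨y, hvy, hwy⟩ := T.exists_leaf_mem_path_not_mem_path v u hwv
  obtain ⟨x, hux, hwx⟩ := T.exists_leaf_mem_path_not_mem_path u (T.leaf y) hwu
  have hwuy : w ∉ (T.isTree.path u (T.leaf y)).support := by
    rw [T.isTree.mem_path_iff_of_mem hvy]
    exact not_or.2 ⟨hw, hwy⟩
  have hvyx : v ∈ (T.isTree.path (T.leaf y) (T.leaf x)).support :=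
    T.isTree.mem_path_of_mem_left hux (T.isTree.mem_path_comm.1 hvy)
  have hwyx : w ∈ (T.isTree.path (T.leaf y) (T.leaf x)).support :=
    hsub (show (y, x) ∈ _ from ⟨hux, hvyx⟩)
  rcases (T.isTree.mem_path_iff_of_mem hux).1 hwyx with h | h
  · exact hwuy (T.isTree.mem_path_comm.1 h)
  · exact hwx h

lemma pairsThrough_injective : Function.Injective T.pairsThrough := fun u v huv => by
  have hu : u ∈ (T.isTree.path v v).support :=
    T.mem_path_iff_pairsThrough_subset.2 (by rw [huv, Set.inter_self])
  simpa [T.isTree.path_self] using hu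

lemma adj_iff_pairsThrough {u v : T.V} :
    T.G.Adj u v ↔ u ≠ v ∧
      ∀ w, T.pairsThrough u ∩ T.pairsThrough v ⊆ T.pairsThrough w → w = u ∨ w = v := by
  simp only [T.isTree.adj_iff_forall_mem_path, T.mem_path_iff_pairsThrough_subset]

section Median

variable {T} {a b c : N} (hab : a ≠ b) (hac : a ≠ c) (hbc : b ≠ c) {m : T.V}
  (hm : T.isTree.IsMedian (T.leaf a) (T.leaf b) (T.leaf c) m)
include hab hac hbc hm

lemma ne_leaf_of_isMedian (z : N) : m ≠ T.leaf z := by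
  rintro rfl
  have h₁ := T.eq_or_eq_of_leaf_mem_path hm.1
  have h₂ := T.eq_or_eq_of_leaf_mem_path hm.2.1
  have h₃ := T.eq_or_eq_of_leaf_mem_path hm.2.2
  grind

lemma inBranch_iff_next_eq {x : N} :
    InBranch T.QT a b c x ↔ T.isTree.next m (T.leaf x) = T.isTree.next m (T.leaf a) := by
  have hne := ne_leaf_of_isMedian hab hac hbc hm
  have hab' := (T.isTree.mem_path_iff_next_ne (hne b)).1 hm.1
  have hac' := (T.isTree.mem_path_iff_next_ne (hne c)).1 hm.2.2
  constructor
  · rintro (rfl | hq)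
    · rfl
    have hc := T.consistent_iff.1 (T.consistent_of_mem_QT hq)
    by_contra hxa
    exact hc m ((T.isTree.mem_path_iff_next_ne (hne a)).2 hxa) hm.2.1
  intro hx
  by_cases hxa : x = a
  · exact Or.inl hxa
  have hxb : x ≠ b := by rintro rfl; exact hab' hx.symm
  have hxc : x ≠ c := by rintro rfl; exact hac' hx.symm
  refine Or.inr ⟨x, a, b, c, hxa, hxb, hxc, hab, hac, hbc, rfl, T.consistent_iff.2 ?_⟩
  intro z hz hzbc
  have hmxa : m ∉ (T.isTree.path (T.leaf x) (T.leaf a)).support :=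
    fun h => (T.isTree.mem_path_iff_next_ne (hne a)).1 h hx
  have hzm : z ≠ m := fun h => hmxa (h ▸ hz)
  have hza : T.isTree.next m z = T.isTree.next m (T.leaf a) := by
    by_contra hza
    exact hmxa (T.isTree.mem_path_of_mem_right hz
      ((T.isTree.mem_path_iff_next_ne (hne a)).2 hza))
  rcases (T.isTree.mem_path_iff_of_mem hm.2.1).1 hzbc with hzb | hzc
  · exact hab' (hza.symm.trans (T.isTree.next_eq_of_mem (T.isTree.mem_path_comm.1 hzb) hzm))
  · exact hac' (hza.symm.trans (T.isTree.next_eq_of_mem hzc hzm))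

lemma pairsThrough_eq_medianPairs : T.pairsThrough m = medianPairs T.QT a b c := by
  have hne := ne_leaf_of_isMedian hab hac hbc hm
  have hdeg : T.G.degree m = 3 :=
    (T.exists_leaf_eq_or_degree_eq_three m).resolve_left fun ⟨z, hz⟩ => hne z hz.symm
  have hab' := (T.isTree.mem_path_iff_next_ne (hne b)).1 hm.1
  have hbc' := (T.isTree.mem_path_iff_next_ne (hne c)).1 hm.2.1
  have hac' := (T.isTree.mem_path_iff_next_ne (hne c)).1 hm.2.2
  have hbranch : ∀ x, T.isTree.next m (T.leaf x) = T.isTree.next m (T.leaf a) ∨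
      T.isTree.next m (T.leaf x) = T.isTree.next m (T.leaf b) ∨
      T.isTree.next m (T.leaf x) = T.isTree.next m (T.leaf c) := fun x =>
    T.eq_or_eq_or_eq_of_adj hdeg (T.isTree.adj_next (hne a)) (T.isTree.adj_next (hne b))
      (T.isTree.adj_next (hne c)) hab' hac' hbc' (T.isTree.adj_next (hne x))
  ext ⟨x, y⟩
  simp only [pairsThrough, medianPairs, Set.mem_ofPred_eq, inBranch_iff_next_eq hab hac hbc hm,
    inBranch_iff_next_eq hbc hab.symm hac.symm hm.rotate,
    inBranch_iff_next_eq hac.symm hbc.symm hab hm.rotate.rotate,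
    T.isTree.mem_path_iff_next_ne (hne y)]
  rcases hbranch x with hx | hx | hx <;> rcases hbranch y with hy | hy | hy <;>
    simp [hx, hy, hab', hac', hbc', hab'.symm, hac'.symm, hbc'.symm]

end Median

lemma exists_leaf_eq_or_isMedian (v : T.V) : (∃ z, T.leaf z = v) ∨
    ∃ a b c, a ≠ b ∧ a ≠ c ∧ b ≠ c ∧ T.isTree.IsMedian (T.leaf a) (T.leaf b) (T.leaf c) v := by
  refine (T.exists_leaf_eq_or_degree_eq_three v).imp id fun hv => ?_
  rw [← card_neighborFinset_eq_degree] at hv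
  obtain ⟨c₁, c₂, c₃, h₁₂, h₁₃, h₂₃, hN⟩ := Finset.card_eq_three.1 hv
  have hadj : ∀ c ∈ ({c₁, c₂, c₃} : Finset T.V), T.G.Adj v c := fun c hc =>
    (mem_neighborFinset _ _ _).1 (hN ▸ hc)
  obtain ⟨a, ha⟩ := T.exists_leaf_next_eq (hadj c₁ (by simp))
  obtain ⟨b, hb⟩ := T.exists_leaf_next_eq (hadj c₂ (by simp))
  obtain ⟨c, hc⟩ := T.exists_leaf_next_eq (hadj c₃ (by simp))
  have hne : ∀ {c x}, T.G.Adj v c → T.isTree.next v (T.leaf x) = c → v ≠ T.leaf x :=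
    fun hvc hx h => hvc.ne (by rw [← hx, ← h, T.isTree.next_self])
  have hmem : ∀ {x y c c'}, T.G.Adj v c' → T.isTree.next v (T.leaf x) = c →
      T.isTree.next v (T.leaf y) = c' → c ≠ c' →
      v ∈ (T.isTree.path (T.leaf x) (T.leaf y)).support :=
    fun hvc' hx hy hcc' => (T.isTree.mem_path_iff_next_ne (hne hvc' hy)).2 (hx ▸ hy ▸ hcc')
  refine ⟨a, b, c, ?_, ?_, ?_, hmem (hadj c₂ (by simp)) ha hb h₁₂,
    hmem (hadj c₃ (by simp)) hb hc h₂₃, hmem (hadj c₃ (by simp)) ha hc h₁₃⟩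
  · rintro rfl; exact h₁₂ (ha.symm.trans hb)
  · rintro rfl; exact h₁₃ (ha.symm.trans hc)
  · rintro rfl; exact h₂₃ (hb.symm.trans hc)

lemma range_pairsThrough_subset {T T' : TernaryTree N} (h : T.QT = T'.QT) :
    Set.range T.pairsThrough ⊆ Set.range T'.pairsThrough := by
  rintro _ ⟨v, rfl⟩
  rcases T.exists_leaf_eq_or_isMedian v with ⟨z, rfl⟩ | ⟨a, b, c, hab, hac, hbc, hm⟩
  · exact ⟨T'.leaf z, by rw [pairsThrough_leaf, pairsThrough_leaf]⟩
  · obtain ⟨m, hm'⟩ := T'.isTree.exists_isMedian (T'.leaf a) (T'.leaf b) (T'.leaf c)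
    exact ⟨m, by rw [pairsThrough_eq_medianPairs hab hac hbc hm,
      pairsThrough_eq_medianPairs hab hac hbc hm', h]⟩

lemma exists_equiv_pairsThrough_eq {T T' : TernaryTree N} (h : T.QT = T'.QT) :
    ∃ φ : T.V ≃ T'.V, ∀ v, T'.pairsThrough (φ v) = T.pairsThrough v := by
  have hrange := (range_pairsThrough_subset h).antisymm (range_pairsThrough_subset h.symm)
  refine ⟨(Equiv.ofInjective _ T.pairsThrough_injective).trans
    ((Equiv.setCongr hrange).trans (Equiv.ofInjective _ T'.pairsThrough_injective).symm),
    fun v => ?_⟩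
  simp [Equiv.apply_ofInjective_symm]

lemma adj_iff_adj_of_pairsThrough_eq {T T' : TernaryTree N} (φ : T.V ≃ T'.V)
    (hφ : ∀ v, T'.pairsThrough (φ v) = T.pairsThrough v) (u v : T.V) :
    T.G.Adj u v ↔ T'.G.Adj (φ u) (φ v) := by
  rw [adj_iff_pairsThrough, adj_iff_pairsThrough, ← φ.forall_congr_right]
  simp only [hφ, φ.injective.ne_iff, φ.injective.eq_iff]

end TernaryTree

theorem tree_determined_by_embedded_quartet_topologies_general
    {N : Type} (T T' : TernaryTree N) (h : T.QT = T'.QT) :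
    TreeIso T T' := by
  obtain ⟨φ, hφ⟩ := TernaryTree.exists_equiv_pairsThrough_eq h
  refine ⟨φ, TernaryTree.adj_iff_adj_of_pairsThrough_eq φ hφ, fun x => ?_⟩
  apply T'.pairsThrough_injective
  rw [hφ, TernaryTree.pairsThrough_leaf, TernaryTree.pairsThrough_leaf]

/-- A ternary tree on `N` (with `|N| ≥ 4`) is uniquely determined, up to a
graph isomorphism fixing each labeled leaf, by its set of embedded quartet
topologies. -/
theorem tree_determined_by_embedded_quartet_topologies
    {N : Type} [Fintype N] (h4 : 4 ≤ Fintype.card N)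
    (T T' : TernaryTree N) (h : T.QT = T'.QT) :
    TreeIso T T' :=
  tree_determined_by_embedded_quartet_topologies_general T T' h
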